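/- Let K = ℚ(√d) with d a negative squarefree integer, let m ∈ ℤ, let k be a positive integer, and let s ∈ ℂ with Re(s) > 1. Then both series below converge absolutely and (Σ_{n=1}^∞ χ_k(n) n^{−2s}) · (Σ_{α ∈ V} (α/ᾱ)^m χ_k(α) N(α)^{−s}) = Σ_{γ ∈ O, γ ≠ 0} (γ/γ̄)^m χ_k(γ) N(γ)^{−s}. -/

import Mathlib

open MeasureTheory

/-- √d as a complex number: positive real square root for d ≥ 0, and
    i·√|d| (positive imaginary part) for d < 0. -/
noncomputable def sqrtd (d : ℤ) : ℂ :=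
  if 0 ≤ d then ((Real.sqrt d : ℝ) : ℂ) else Complex.I * ((Real.sqrt (-d) : ℝ) : ℂ)

/-- ω = √d if d ≡ 2,3 mod 4 and ω = (1+√d)/2 if d ≡ 1 mod 4. -/
noncomputable def omg (d : ℤ) : ℂ :=
  if d % 4 = 1 then (1 + sqrtd d) / 2 else sqrtd d

/-- The conjugate ω̄ of ω. -/
noncomputable def omgBar (d : ℤ) : ℂ :=
  if d % 4 = 1 then (1 - sqrtd d) / 2 else -sqrtd d

/-- The element a + bω of O = ℤ ⊕ ℤω. -/
noncomputable def elt (d a b : ℤ) : ℂ := (a : ℂ) + (b : ℂ) * omg d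

/-- The conjugate a + bω̄ of a + bω. -/
noncomputable def eltBar (d a b : ℤ) : ℂ := (a : ℂ) + (b : ℂ) * omgBar d

/-- The norm N(a + bω) = (a+bω)(a+bω̄) as a rational integer. -/
def Nrm (d a b : ℤ) : ℤ :=
  if d % 4 = 1 then a ^ 2 + a * b + b ^ 2 * ((1 - d) / 4) else a ^ 2 - d * b ^ 2

/-- Membership in the ring of integers O = ℤ ⊕ ℤω. -/
def InO (d : ℤ) (z : ℂ) : Prop := ∃ a b : ℤ, z = elt d a b

/-- z is a unit of the ring O. -/
def IsUnitO (d : ℤ) (z : ℂ) : Prop := InO d z ∧ ∃ y : ℂ, InO d y ∧ z * y = 1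

/-- z is a visible point: z = a + bω with gcd(a,b) = 1. -/
def Visible (d : ℤ) (z : ℂ) : Prop := ∃ a b : ℤ, Int.gcd a b = 1 ∧ z = elt d a b

/-- γ ∼ γ' : there are a unit υ and positive integers m, n with υmγ' = nγ. -/
def Sim (d : ℤ) (γ γ' : ℂ) : Prop :=
  ∃ υ : ℂ, IsUnitO d υ ∧ ∃ m n : ℕ, 0 < m ∧ 0 < n ∧ υ * (m : ℂ) * γ' = (n : ℂ) * γ

/-- The set N of elements of K = ℚ(√d) of norm 1. -/
noncomputable def NormOne (d : ℤ) : Set ℂ :=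
  {z | ∃ a b : ℚ, z = (a : ℂ) + (b : ℂ) * sqrtd d ∧ a ^ 2 - (d : ℚ) * b ^ 2 = 1}


/-!
Every nonzero `γ = a + bω` is uniquely `g α` with `g = gcd(a, b)` a positive integer and `α`
visible, and the summand is multiplicative along this factorisation:
`(gα / gᾱ)^m = (α / ᾱ)^m`, `χ_k(g² N(α)) = χ_k(g) χ_k(N(α))` and
`(g² N(α))^{-s} = g^{-2s} N(α)^{-s}`. So the right-hand side is the Cauchy product of the two
series on the left, reindexed by `ℕ+ × V`. Absolute convergence comes from `d < 0`, which makes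
the norm form positive definite: `a² + b² ≤ 2 N(a + bω)`, so the summands are
`O(max(|a|, |b|)^{-2 Re s})`, summable over `ℤ²` when `Re s > 1`.
-/

lemma sqrtd_sq (d : ℤ) : sqrtd d ^ 2 = d := by
  unfold sqrtd
  split_ifs with h
  · rw [← Complex.ofReal_pow, Real.sq_sqrt (by exact_mod_cast h)]
    norm_cast
  · rw [mul_pow, Complex.I_sq, ← Complex.ofReal_pow,
      Real.sq_sqrt (by exact_mod_cast (by omega : (0 : ℤ) ≤ -d))]
    push_cast
    ring

lemma conj_sqrtd_of_neg {d : ℤ} (hd : d < 0) : starRingEnd ℂ (sqrtd d) = -sqrtd d := by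
  simp [sqrtd, if_neg (not_le.2 hd), Complex.conj_I]

lemma elt_mul_eltBar (d a b : ℤ) : elt d a b * eltBar d a b = Nrm d a b := by
  have hsq := sqrtd_sq d
  unfold elt eltBar omg omgBar Nrm
  split_ifs with h
  · have hc : (((1 - d) / 4 : ℤ) : ℂ) * 4 = 1 - d := by
      exact_mod_cast congrArg (Int.cast : ℤ → ℂ)
        (Int.ediv_mul_cancel (by omega : (4 : ℤ) ∣ 1 - d))
    push_cast
    linear_combination (-(b : ℂ) ^ 2 / 4) * hsq - ((b : ℂ) ^ 2 / 4) * hc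
  · push_cast
    linear_combination (-(b : ℂ) ^ 2) * hsq

lemma eltBar_eq_conj {d : ℤ} (hd : d < 0) (a b : ℤ) :
    eltBar d a b = starRingEnd ℂ (elt d a b) := by
  unfold elt eltBar omg omgBar
  split_ifs <;> simp [map_div₀, map_ofNat, conj_sqrtd_of_neg hd, sub_eq_add_neg]

lemma sq_add_sq_le_two_mul_Nrm {d : ℤ} (hd : d < 0) (a b : ℤ) :
    a ^ 2 + b ^ 2 ≤ 2 * Nrm d a b := by
  unfold Nrm
  split_ifs with h4
  · have : 1 ≤ (1 - d) / 4 := by omega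
    nlinarith [sq_nonneg (a + b), sq_nonneg b]
  · nlinarith [sq_nonneg a, mul_nonneg (sq_nonneg b) (by omega : (0 : ℤ) ≤ -2 * d - 1)]

lemma Nrm_pos {d : ℤ} (hd : d < 0) {a b : ℤ} (hab : (a, b) ≠ (0, 0)) : 0 < Nrm d a b := by
  have : 0 < a ^ 2 + b ^ 2 := by
    by_cases ha : a = 0
    · have hb : b ≠ 0 := fun hb => hab (by rw [ha, hb])
      positivity
    · positivity
  linarith [sq_add_sq_le_two_mul_Nrm hd a b]

lemma norm_elt_div_eltBar_zpow {d : ℤ} (hd : d < 0) {a b : ℤ} (hab : (a, b) ≠ (0, 0))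
    (m : ℤ) :
    ‖(elt d a b / eltBar d a b) ^ m‖ = 1 := by
  have helt : elt d a b ≠ 0 := by
    intro h0
    have := elt_mul_eltBar d a b
    rw [h0, zero_mul, eq_comm, Int.cast_eq_zero] at this
    exact (Nrm_pos hd hab).ne' this
  rw [norm_zpow, norm_div, eltBar_eq_conj hd, RCLike.norm_conj, div_self (norm_ne_zero_iff.2 helt),
    one_zpow]

lemma elt_div_eltBar_mul_mul (d : ℤ) {g : ℤ} (hg : g ≠ 0) (a b : ℤ) :
    elt d (g * a) (g * b) / eltBar d (g * a) (g * b) = elt d a b / eltBar d a b := by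
  have hg' : (g : ℂ) ≠ 0 := Int.cast_ne_zero.2 hg
  have he : elt d (g * a) (g * b) = g * elt d a b := by unfold elt; push_cast; ring
  have hb : eltBar d (g * a) (g * b) = g * eltBar d a b := by unfold eltBar; push_cast; ring
  rw [he, hb, mul_div_mul_left _ _ hg']

lemma Nrm_mul_mul (d g a b : ℤ) : Nrm d (g * a) (g * b) = g ^ 2 * Nrm d a b := by
  unfold Nrm
  split_ifs <;> ring

lemma Int.gcd_sq_mul_eq_one_iff (g n k : ℤ) :
    Int.gcd (g ^ 2 * n) k = 1 ↔ Int.gcd g k = 1 ∧ Int.gcd n k = 1 := by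
  simp only [← Int.isCoprime_iff_gcd_eq_one]
  rw [IsCoprime.mul_left_iff, IsCoprime.pow_left_iff two_pos]

lemma cpow_natCast_sq_mul (n : ℕ) {x : ℝ} (hx : 0 ≤ x) (s : ℂ) :
    ((n : ℂ) ^ 2 * x) ^ s = (n : ℂ) ^ (2 * s) * (x : ℂ) ^ s := by
  have h := Complex.mul_cpow_ofReal_nonneg (by positivity : (0 : ℝ) ≤ (n : ℝ) ^ 2) hx s
  push_cast at h
  rw [h, ← Complex.natCast_cpow_natCast_mul]
  norm_num

noncomputable def zetaSummand (k : ℕ) (s : ℂ) (n : ℕ+) : ℂ :=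
  (if Nat.gcd n k = 1 then 1 else 0) * (n : ℂ) ^ (-(2 * s))

noncomputable def heckeSummand (d : ℤ) (k : ℕ) (m : ℤ) (s : ℂ) (p : ℤ × ℤ) : ℂ :=
  (elt d p.1 p.2 / eltBar d p.1 p.2) ^ m *
    (if Int.gcd (Nrm d p.1 p.2) k = 1 then 1 else 0) * (Nrm d p.1 p.2 : ℂ) ^ (-s)

lemma heckeSummand_mul_mul {d : ℤ} (hd : d < 0) (k : ℕ) (m : ℤ) (s : ℂ) (g : ℕ+) {a b : ℤ}
    (hab : (a, b) ≠ (0, 0)) :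
    heckeSummand d k m s (g * a, g * b) = zetaSummand k s g * heckeSummand d k m s (a, b) := by
  have hcoprime : Int.gcd ((g : ℤ) ^ 2 * Nrm d a b) k = 1 ↔
      Nat.gcd g k = 1 ∧ Int.gcd (Nrm d a b) k = 1 := by
    rw [Int.gcd_sq_mul_eq_one_iff, Int.gcd_natCast_natCast]
  have hpow : (((g : ℤ) ^ 2 * Nrm d a b : ℤ) : ℂ) ^ (-s) =
      (g : ℂ) ^ (-(2 * s)) * (Nrm d a b : ℂ) ^ (-s) := by
    have := cpow_natCast_sq_mul g (x := Nrm d a b) (by exact_mod_cast (Nrm_pos hd hab).le) (-s)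
    push_cast at this ⊢
    rwa [mul_neg] at this
  simp only [heckeSummand, zetaSummand]
  rw [elt_div_eltBar_mul_mul d (by exact_mod_cast g.ne_zero), Nrm_mul_mul, hpow]
  by_cases hg : Nat.gcd g k = 1 <;> by_cases hN : Int.gcd (Nrm d a b) k = 1 <;>
    simp only [hcoprime, hg, hN, and_self, and_false, false_and, if_true, if_false] <;> ring

lemma norm_ite_one_zero_mul_le (P : Prop) [Decidable P] (z : ℂ) :
    ‖(if P then (1 : ℂ) else 0) * z‖ ≤ ‖z‖ := by
  split_ifs <;> simp

lemma summable_norm_zetaSummand (k : ℕ) {s : ℂ} (hs : 1 < 2 * s.re) :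
    Summable fun n => ‖zetaSummand k s n‖ := by
  have hb : Summable fun n : ℕ+ => ((n : ℕ) : ℝ) ^ (-(2 * s.re)) :=
    (Real.summable_nat_rpow.2 (by linarith)).comp_injective PNat.coe_injective
  refine hb.of_nonneg_of_le (fun _ => norm_nonneg _) fun n => ?_
  calc ‖zetaSummand k s n‖ ≤ ‖((n : ℕ) : ℂ) ^ (-(2 * s))‖ := norm_ite_one_zero_mul_le _ _
    _ = ((n : ℕ) : ℝ) ^ (-(2 * s.re)) := by
      rw [Complex.norm_natCast_cpow_of_pos n.pos]
      simp

lemma summable_norm_intProd_rpow {r : ℝ} (hr : 2 < r) :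
    Summable fun x : ℤ × ℤ => ‖x‖ ^ (-r) := by
  refine ((EisensteinSeries.summable_one_div_norm_rpow hr).comp_injective
    (finTwoArrowEquiv ℤ).symm.injective).congr fun x => ?_
  simp [EisensteinSeries.norm_eq_max_natAbs, Prod.norm_def, Int.norm_eq_abs]

lemma norm_sq_le_two_mul_Nrm {d : ℤ} (hd : d < 0) (p : ℤ × ℤ) :
    ‖p‖ ^ 2 ≤ 2 * (Nrm d p.1 p.2 : ℝ) := by
  have h : (p.1 : ℝ) ^ 2 + (p.2 : ℝ) ^ 2 ≤ 2 * Nrm d p.1 p.2 := by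
    exact_mod_cast sq_add_sq_le_two_mul_Nrm hd p.1 p.2
  rw [Prod.norm_def, Int.norm_eq_abs, Int.norm_eq_abs]
  rcases max_cases |(p.1 : ℝ)| |(p.2 : ℝ)| with ⟨hm, -⟩ | ⟨hm, -⟩ <;> rw [hm, sq_abs] <;>
    nlinarith [sq_nonneg (p.1 : ℝ), sq_nonneg (p.2 : ℝ)]

lemma norm_heckeSummand_le {d : ℤ} (hd : d < 0) (k : ℕ) (m : ℤ) {s : ℂ} (hs : 0 ≤ s.re)
    {p : ℤ × ℤ} (hp : p ≠ (0, 0)) :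
    ‖heckeSummand d k m s p‖ ≤ 2 ^ s.re * ‖p‖ ^ (-(2 * s.re)) := by
  have hN : (0 : ℝ) < Nrm d p.1 p.2 := by exact_mod_cast Nrm_pos hd hp
  have hp0 : 0 < ‖p‖ := norm_pos_iff.2 hp
  calc ‖heckeSummand d k m s p‖ ≤ ‖((Nrm d p.1 p.2 : ℝ) : ℂ) ^ (-s)‖ := by
        rw [heckeSummand, mul_assoc, norm_mul, norm_elt_div_eltBar_zpow hd hp, one_mul]
        exact_mod_cast norm_ite_one_zero_mul_le _ _
    _ = (Nrm d p.1 p.2 : ℝ) ^ (-s.re) := Complex.norm_cpow_eq_rpow_re_of_pos hN _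
    _ ≤ (‖p‖ ^ 2 / 2) ^ (-s.re) := Real.rpow_le_rpow_of_nonpos (by positivity)
        (by linarith [norm_sq_le_two_mul_Nrm hd p]) (by linarith)
    _ = 2 ^ s.re * ‖p‖ ^ (-(2 * s.re)) := by
        rw [Real.div_rpow (by positivity) zero_le_two, Real.rpow_neg zero_le_two, div_inv_eq_mul,
          ← Real.rpow_natCast, ← Real.rpow_mul hp0.le]
        push_cast
        ring_nf

lemma summable_norm_heckeSummand {d : ℤ} (hd : d < 0) (k : ℕ) (m : ℤ) {s : ℂ} (hs : 1 < s.re)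
    {P : ℤ × ℤ → Prop} (hP : ∀ p, P p → p ≠ (0, 0)) :
    Summable fun p : {p // P p} => ‖heckeSummand d k m s p.1‖ :=
  (((summable_norm_intProd_rpow (r := 2 * s.re) (by linarith)).mul_left (2 ^ s.re)).subtype
    {p | P p}).of_nonneg_of_le (fun _ => norm_nonneg _)
    fun p => norm_heckeSummand_le hd k m (by linarith) (hP _ p.2)

lemma pair_ne_zero_of_gcd_eq_one {p : ℤ × ℤ} (h : Int.gcd p.1 p.2 = 1) : p ≠ (0, 0) := by
  rintro rfl
  simp at h

lemma gcd_pos_of_pair_ne_zero {p : ℤ × ℤ} (h : p ≠ (0, 0)) : 0 < Int.gcd p.1 p.2 :=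
  Int.gcd_pos_iff.2 (by by_contra! h0; exact h (Prod.ext h0.1 h0.2))

def pnatProdCoprimeEquiv :
    ℕ+ × {p : ℤ × ℤ // Int.gcd p.1 p.2 = 1} ≃ {p : ℤ × ℤ // p ≠ (0, 0)} where
  toFun x := ⟨(x.1 * x.2.1.1, x.1 * x.2.1.2), fun h => pair_ne_zero_of_gcd_eq_one x.2.2 <| by
    simpa [x.1.ne_zero, Prod.ext_iff] using h⟩
  invFun y := (⟨Int.gcd y.1.1 y.1.2, gcd_pos_of_pair_ne_zero y.2⟩,
    ⟨(y.1.1 / Int.gcd y.1.1 y.1.2, y.1.2 / Int.gcd y.1.1 y.1.2),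
      Int.gcd_div_gcd_div_gcd (gcd_pos_of_pair_ne_zero y.2)⟩)
  left_inv := by
    rintro ⟨g, ⟨a, b⟩, hab⟩
    have hgcd : Int.gcd (g * a) (g * b) = g := by simp [Int.gcd_mul_left, hab]
    have hg : (g : ℤ) ≠ 0 := by exact_mod_cast g.ne_zero
    ext <;> simp only [hgcd]
    · rfl
    · exact Int.mul_ediv_cancel_left a hg
    · exact Int.mul_ediv_cancel_left b hg
  right_inv := by
    rintro ⟨⟨a, b⟩, h⟩
    ext
    · exact Int.mul_ediv_cancel' (Int.gcd_dvd_left _ _)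
    · exact Int.mul_ediv_cancel' (Int.gcd_dvd_right _ _)

theorem zeta_chi_mul_visible_sum_eq_general
    (d : ℤ) (hdneg : d < 0)
    (m : ℤ) (k : ℕ) (s : ℂ) (hs : 1 < s.re) :
    Summable (fun n : ℕ+ =>
      ‖(if Nat.gcd (n : ℕ) k = 1 then (1 : ℂ) else 0) * (n : ℂ) ^ (-(2 * s))‖) ∧
    Summable (fun p : {p : ℤ × ℤ // Int.gcd p.1 p.2 = 1} =>
      ‖(elt d p.1.1 p.1.2 / eltBar d p.1.1 p.1.2) ^ m *
        (if Int.gcd (Nrm d p.1.1 p.1.2) k = 1 then (1 : ℂ) else 0) *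
        ((Nrm d p.1.1 p.1.2 : ℂ)) ^ (-s)‖) ∧
    Summable (fun p : {p : ℤ × ℤ // p ≠ (0, 0)} =>
      ‖(elt d p.1.1 p.1.2 / eltBar d p.1.1 p.1.2) ^ m *
        (if Int.gcd (Nrm d p.1.1 p.1.2) k = 1 then (1 : ℂ) else 0) *
        ((Nrm d p.1.1 p.1.2 : ℂ)) ^ (-s)‖) ∧
    (∑' n : ℕ+, (if Nat.gcd (n : ℕ) k = 1 then (1 : ℂ) else 0) * (n : ℂ) ^ (-(2 * s))) *
      (∑' p : {p : ℤ × ℤ // Int.gcd p.1 p.2 = 1},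
        (elt d p.1.1 p.1.2 / eltBar d p.1.1 p.1.2) ^ m *
          (if Int.gcd (Nrm d p.1.1 p.1.2) k = 1 then (1 : ℂ) else 0) *
          ((Nrm d p.1.1 p.1.2 : ℂ)) ^ (-s)) =
    ∑' p : {p : ℤ × ℤ // p ≠ (0, 0)},
      (elt d p.1.1 p.1.2 / eltBar d p.1.1 p.1.2) ^ m *
        (if Int.gcd (Nrm d p.1.1 p.1.2) k = 1 then (1 : ℂ) else 0) *
        ((Nrm d p.1.1 p.1.2 : ℂ)) ^ (-s) := by
  have hζ := summable_norm_zetaSummand k (s := s) (by linarith)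
  have hV := summable_norm_heckeSummand hdneg k m hs fun _ => pair_ne_zero_of_gcd_eq_one
  have hO := summable_norm_heckeSummand hdneg k m hs (P := (· ≠ (0, 0))) fun _ => id
  refine ⟨hζ, hV, hO, ?_⟩
  change (∑' n, zetaSummand k s n) * (∑' p : {p : ℤ × ℤ // Int.gcd p.1 p.2 = 1},
    heckeSummand d k m s p.1) = ∑' p : {p : ℤ × ℤ // p ≠ (0, 0)}, heckeSummand d k m s p.1
  rw [tsum_mul_tsum_of_summable_norm hζ hV, ← pnatProdCoprimeEquiv.tsum_eq]
  exact tsum_congr fun ⟨g, p, hp⟩ =>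
    (heckeSummand_mul_mul hdneg k m s g (pair_ne_zero_of_gcd_eq_one hp)).symm

/-- Lemma (Euler-type factorization): for K = ℚ(√d) imaginary quadratic,
    m ∈ ℤ, k ≥ 1 and Re(s) > 1, all series converge absolutely and
    ζ(2s, χ_k) · Σ_{α ∈ V} (α/ᾱ)^m χ_k(α) N(α)^{-s}
      = Σ_{0 ≠ γ ∈ O} (γ/γ̄)^m χ_k(γ) N(γ)^{-s}. -/
theorem zeta_chi_mul_visible_sum_eq
    (d : ℤ) (hd : Squarefree d) (hdneg : d < 0)
    (m : ℤ) (k : ℕ) (hk : 0 < k) (s : ℂ) (hs : 1 < s.re) :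
    Summable (fun n : ℕ+ =>
      ‖(if Nat.gcd (n : ℕ) k = 1 then (1 : ℂ) else 0) * (n : ℂ) ^ (-(2 * s))‖) ∧
    Summable (fun p : {p : ℤ × ℤ // Int.gcd p.1 p.2 = 1} =>
      ‖(elt d p.1.1 p.1.2 / eltBar d p.1.1 p.1.2) ^ m *
        (if Int.gcd (Nrm d p.1.1 p.1.2) k = 1 then (1 : ℂ) else 0) *
        ((Nrm d p.1.1 p.1.2 : ℂ)) ^ (-s)‖) ∧
    Summable (fun p : {p : ℤ × ℤ // p ≠ (0, 0)} =>
      ‖(elt d p.1.1 p.1.2 / eltBar d p.1.1 p.1.2) ^ m *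
        (if Int.gcd (Nrm d p.1.1 p.1.2) k = 1 then (1 : ℂ) else 0) *
        ((Nrm d p.1.1 p.1.2 : ℂ)) ^ (-s)‖) ∧
    (∑' n : ℕ+, (if Nat.gcd (n : ℕ) k = 1 then (1 : ℂ) else 0) * (n : ℂ) ^ (-(2 * s))) *
      (∑' p : {p : ℤ × ℤ // Int.gcd p.1 p.2 = 1},
        (elt d p.1.1 p.1.2 / eltBar d p.1.1 p.1.2) ^ m *
          (if Int.gcd (Nrm d p.1.1 p.1.2) k = 1 then (1 : ℂ) else 0) *
          ((Nrm d p.1.1 p.1.2 : ℂ)) ^ (-s)) =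
    ∑' p : {p : ℤ × ℤ // p ≠ (0, 0)},
      (elt d p.1.1 p.1.2 / eltBar d p.1.1 p.1.2) ^ m *
        (if Int.gcd (Nrm d p.1.1 p.1.2) k = 1 then (1 : ℂ) else 0) *
        ((Nrm d p.1.1 p.1.2 : ℂ)) ^ (-s) :=
  zeta_chi_mul_visible_sum_eq_general d hdneg m k s hs
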